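/- Let E and F be finite-dimensional real inner product spaces, n a positive integer, K : (Fin n → E) → F a descriptor, φ̄ : Fin n → E a fixed observation, and energy E_φ̄(μ) = (1/2)‖K(μ) − K(φ̄)‖². Assume that for every configuration μ and every index i, the map y ↦ K(Function.update μ i (μ i + y)) is differentiable. Let T : E → E, T x = A x + b be a rigid transformation with A a linear isometry equivalence of E and b ∈ E, and assume K is T-invariant. Then the particle gradients are equivariant: for every configuration μ and every index i, ∇_i E_φ̄(T ∘ μ) = A (∇_i E_φ̄(μ)). -/

import Mathlib

/-!
A rigid motion `T x = A x + b` preserves the energy, because it preserves `K`. Moving particle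
`i` of `T ∘ μ` by `y` is `T` applied to `μ` with particle `i` moved by `A⁻¹ y`, so the
perturbed energy around `T ∘ μ` is the perturbed energy around `μ` composed with `A⁻¹`, and
gradients transform under an isometry by the isometry itself.
-/

open scoped InnerProductSpace

theorem LinearIsometryEquiv.gradient_comp {𝕜 E E' : Type*} [RCLike 𝕜]
    [NormedAddCommGroup E] [InnerProductSpace 𝕜 E] [CompleteSpace E]
    [NormedAddCommGroup E'] [InnerProductSpace 𝕜 E'] [CompleteSpace E']
    (A : E ≃ₗᵢ[𝕜] E') (f : E' → 𝕜) (x : E) :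
    gradient (f ∘ A) x = A.symm (gradient f (A x)) := by
  refine ext_inner_right 𝕜 fun v => ?_
  calc ⟪gradient (f ∘ A) x, v⟫_𝕜
      = fderiv 𝕜 f (A x) (A v) := by
        rw [inner_gradient_left, ← A.coe_toContinuousLinearEquiv,
          ContinuousLinearEquiv.comp_right_fderiv]
        rfl
    _ = ⟪A.symm (gradient f (A x)), v⟫_𝕜 := by
        rw [← inner_gradient_left, ← A.inner_map_map, A.apply_symm_apply]

theorem particle_gradient_equivariant_general
    {E F : Type*}
    [NormedAddCommGroup E] [InnerProductSpace ℝ E] [FiniteDimensional ℝ E]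
    [NormedAddCommGroup F]
    {n : ℕ}
    (K : (Fin n → E) → F) (φ : Fin n → E)
    (Energy : (Fin n → E) → ℝ)
    (hEnergy : ∀ μ, Energy μ = (1 / 2 : ℝ) * ‖K μ - K φ‖ ^ 2)
    (A : E ≃ₗᵢ[ℝ] E) (b : E) (T : E → E) (hT : ∀ x, T x = A x + b)
    (hKinv : ∀ μ : Fin n → E, K (T ∘ μ) = K μ) :
    ∀ (μ : Fin n → E) (i : Fin n),
      gradient (fun y : E => Energy (Function.update (T ∘ μ) i ((T ∘ μ) i + y))) 0
        = A (gradient (fun y : E => Energy (Function.update μ i (μ i + y))) 0) := by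
  intro μ i
  have energy_comp : ∀ ν, Energy (T ∘ ν) = Energy ν := by simp [hEnergy, hKinv]
  have shift : ∀ y, T (μ i + A.symm y) = T (μ i) + y := fun y => by
    simp only [hT, map_add, A.apply_symm_apply]
    abel
  calc gradient (fun y : E => Energy (Function.update (T ∘ μ) i ((T ∘ μ) i + y))) 0
      = gradient ((fun y : E => Energy (Function.update μ i (μ i + y))) ∘ A.symm) 0 := by
        congr 1
        funext y
        show _ = Energy (Function.update μ i (μ i + A.symm y))
        rw [← energy_comp (Function.update μ i _), Function.comp_update, shift]
        rfl
    _ = A (gradient (fun y : E => Energy (Function.update μ i (μ i + y))) 0) := by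
        rw [A.symm.gradient_comp, map_zero, A.symm_symm]

/-- **Equivariance of the particle gradients** (equation (22) in the proof of Theorem 1 of
the paper): if the descriptor `K` is invariant under the rigid transformation `T x = A x + b`,
then `∇_i E_φ̄ (T ∘ μ) = A (∇_i E_φ̄ μ)`. -/
theorem particle_gradient_equivariant
    {E F : Type*}
    [NormedAddCommGroup E] [InnerProductSpace ℝ E] [FiniteDimensional ℝ E]
    [NormedAddCommGroup F] [InnerProductSpace ℝ F] [FiniteDimensional ℝ F]
    {n : ℕ} (hn : 0 < n)
    (K : (Fin n → E) → F) (φ : Fin n → E)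
    (Energy : (Fin n → E) → ℝ)
    (hEnergy : ∀ μ, Energy μ = (1 / 2 : ℝ) * ‖K μ - K φ‖ ^ 2)
    (hKdiff : ∀ (μ : Fin n → E) (i : Fin n),
      Differentiable ℝ (fun y : E => K (Function.update μ i (μ i + y))))
    (A : E ≃ₗᵢ[ℝ] E) (b : E) (T : E → E) (hT : ∀ x, T x = A x + b)
    (hKinv : ∀ μ : Fin n → E, K (T ∘ μ) = K μ) :
    ∀ (μ : Fin n → E) (i : Fin n),
      gradient (fun y : E => Energy (Function.update (T ∘ μ) i ((T ∘ μ) i + y))) 0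
        = A (gradient (fun y : E => Energy (Function.update μ i (μ i + y))) 0) :=
  particle_gradient_equivariant_general K φ Energy hEnergy A b T hT hKinv
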